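/- arXiv:1807.07397 — 2 statements merged into one kernel-verified Lean document; each statement's English description precedes it below -/
import Mathlib

section
/- Let z ∈ ℝ^n. Then C_{2n}^II (z^T, 0^T)^T, after even-odd permutation, equals (1/√2)((C_n^II z)^T, (C_n^IV z)^T)^T; that is, the even-indexed entries of the DCT-II of (z,0) are (1/√2) C_n^II z and the odd-indexed entries are (1/√2) C_n^IV z. -/
open Matrix

/-- The cosine matrix of type II of size `n`. -/
noncomputable def CII (n : ℕ) : Matrix (Fin n) (Fin n) ℝ :=
  Matrix.of fun k l : Fin n =>
    Real.sqrt (2 / (n : ℝ)) * (if (k : ℕ) % n = 0 then 1 / Real.sqrt 2 else 1) *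
      Real.cos ((k : ℕ) * (2 * (l : ℕ) + 1) * Real.pi / (2 * (n : ℝ)))

/-- The cosine matrix of type IV of size `n`. -/
noncomputable def CIV (n : ℕ) : Matrix (Fin n) (Fin n) ℝ :=
  Matrix.of fun k l : Fin n =>
    Real.sqrt (2 / (n : ℝ)) *
      Real.cos ((2 * (k : ℕ) + 1) * (2 * (l : ℕ) + 1) * Real.pi / (4 * (n : ℝ)))

/-! Zero padding restricts each row of `C_{2n}^II` to its first `n` columns. Row `2k` of that
block is row `k` of `C_n^II` (the angles coincide), and row `2k+1` is row `k` of `C_n^IV` (its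
angle `(2k+1)(2l+1)π/(4n)` is exactly the type-IV one); in both cases the normalisation `√(2/(2n))`
contributes the factor `1/√2`. -/

theorem dotProduct_zeroPad {R : Type*} [NonUnitalNonAssocSemiring R] {m n : ℕ} (h : n ≤ m)
    (v : Fin m → R) (z : Fin n → R) :
    v ⬝ᵥ (fun i : Fin m => if hi : (i : ℕ) < n then z ⟨i, hi⟩ else 0) =
      (fun j : Fin n => v (Fin.castLE h j)) ⬝ᵥ z := by
  symm
  refine Fintype.sum_of_injective (Fin.castLE h) (Fin.castLE_injective h) _ _ ?_ ?_
  · intro i hi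
    have hin : ¬ (i : ℕ) < n := fun hlt => hi ⟨⟨i, hlt⟩, rfl⟩
    simp [hin]
  · simp

theorem sqrt_two_div_two_mul (n : ℕ) :
    Real.sqrt (2 / ((2 * n : ℕ) : ℝ)) = 1 / Real.sqrt 2 * Real.sqrt (2 / (n : ℝ)) := by
  rw [Nat.cast_mul, Nat.cast_two, show (2 : ℝ) / (2 * n) = 2⁻¹ * (2 / n) by ring,
    Real.sqrt_mul (by norm_num), Real.sqrt_inv, one_div]

theorem CII_two_mul_apply_even {n : ℕ} (k l : Fin n) :
    CII (2 * n) ⟨2 * k, by omega⟩ (Fin.castLE (by omega) l) = 1 / Real.sqrt 2 * CII n k l := by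
  have hn : (n : ℝ) ≠ 0 := by have := k.pos; positivity
  have hmod : 2 * (k : ℕ) % (2 * n) = 0 ↔ (k : ℕ) % n = 0 := by
    rw [Nat.mul_mod_mul_left]; omega
  have hangle : ((2 * (k : ℕ) : ℕ) : ℝ) * (2 * (l : ℕ) + 1) * Real.pi / (2 * ((2 * n : ℕ) : ℝ))
      = (k : ℕ) * (2 * (l : ℕ) + 1) * Real.pi / (2 * (n : ℝ)) := by
    push_cast; field_simp
  simp only [CII, of_apply, Fin.val_castLE]
  rw [hangle, sqrt_two_div_two_mul, if_congr hmod rfl rfl]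
  ring

theorem CII_two_mul_apply_odd {n : ℕ} (k l : Fin n) :
    CII (2 * n) ⟨2 * k + 1, by omega⟩ (Fin.castLE (by omega) l) = 1 / Real.sqrt 2 * CIV n k l := by
  have hn : (n : ℝ) ≠ 0 := by have := k.pos; positivity
  have hmod : (2 * (k : ℕ) + 1) % (2 * n) ≠ 0 := by
    rw [Nat.mod_eq_of_lt (by omega)]; omega
  have hangle : ((2 * (k : ℕ) + 1 : ℕ) : ℝ) * (2 * (l : ℕ) + 1) * Real.pi / (2 * ((2 * n : ℕ) : ℝ))
      = (2 * (k : ℕ) + 1) * (2 * (l : ℕ) + 1) * Real.pi / (4 * (n : ℝ)) := by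
    push_cast; field_simp; ring
  simp only [CII, CIV, of_apply, Fin.val_castLE]
  rw [hangle, sqrt_two_div_two_mul, if_neg hmod]
  ring

theorem dctII_of_zero_padded (n : ℕ) (z : Fin n → ℝ) (k : Fin n) :
    (CII (2 * n)).mulVec
        (fun i : Fin (2 * n) => if h : (i : ℕ) < n then z ⟨(i : ℕ), h⟩ else 0)
        ⟨2 * (k : ℕ), by have := k.isLt; omega⟩ =
      (1 / Real.sqrt 2) * (CII n).mulVec z k ∧
    (CII (2 * n)).mulVec
        (fun i : Fin (2 * n) => if h : (i : ℕ) < n then z ⟨(i : ℕ), h⟩ else 0)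
        ⟨2 * (k : ℕ) + 1, by have := k.isLt; omega⟩ =
      (1 / Real.sqrt 2) * (CIV n).mulVec z k := by
  have hn : n ≤ 2 * n := by omega
  constructor <;> rw [mulVec, mulVec, dotProduct_zeroPad hn] <;>
    simp only [CII_two_mul_apply_even, CII_two_mul_apply_odd, dotProduct, Finset.mul_sum, mul_assoc]
end

section
/- Let N = 2^J, let x ∈ ℝ^N have short support of length m ≤ M satisfying the non-cancellation condition, L := ⌈log₂ M⌉ + 1, and let j ∈ {L,...,J−1} with the support of x^{(j)} not contained in the last M entries of x^{(j)}. Then the vector ((x^{(j+1)})^II_{2k+1})_{k=0}^{m^{(j)}−1} of the first m^{(j)} oddly indexed DCT-II entries of x^{(j+1)} has at least one nonzero entry. -/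
open Matrix

/-- One step of reflected periodization: add the first half and the reflected second half. -/
noncomputable def halfSum (n : ℕ) (x : Fin (2 * n) → ℝ) : Fin n → ℝ :=
  fun k => x ⟨(k : ℕ), by have := k.isLt; omega⟩ +
           x ⟨2 * n - 1 - (k : ℕ), by have := k.isLt; omega⟩

/-- Iterated reflected periodization, peeling off `s` halving steps. -/
noncomputable def perAux (j : ℕ) : (s : ℕ) → (Fin (2 ^ (j + s)) → ℝ) → Fin (2 ^ j) → ℝ
  | 0, x => x
  | s + 1, x => perAux j s (halfSum (2 ^ (j + s))
      (fun k => x (Fin.cast (by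
        have h1 : j + (s + 1) = (j + s) + 1 := by omega
        rw [h1, pow_succ]; ring) k)))

/-- The reflected periodization `x^{(j)}` of `x ∈ ℝ^{2^J}`. -/
noncomputable def reflPer (J j : ℕ) (h : j ≤ J) (x : Fin (2 ^ J) → ℝ) : Fin (2 ^ j) → ℝ :=
  perAux j (J - j) (fun k => x (Fin.cast (by rw [Nat.add_sub_cancel' h]) k))

/-- `y` has short (one-block) support of length `m` with first support index `μ`. -/
structure ShortSupp {n : ℕ} (y : Fin n → ℝ) (m μ : ℕ) : Prop where
  pos : 1 ≤ m
  bdd : μ + m ≤ n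
  first : ∀ k : Fin n, (k : ℕ) = μ → y k ≠ 0
  last : ∀ k : Fin n, (k : ℕ) = μ + m - 1 → y k ≠ 0
  outside : ∀ k : Fin n, ((k : ℕ) < μ ∨ μ + m ≤ (k : ℕ)) → y k = 0

/-- Non-cancellation condition: if `m` is even, the first and last support entries
do not sum to zero. -/
def NonCancel {n : ℕ} (y : Fin n → ℝ) (m μ : ℕ) : Prop :=
  Even m → ∀ a b : Fin n, (a : ℕ) = μ → (b : ℕ) = μ + m - 1 → y a + y b ≠ 0


/-!
Write `n = 2 ^ j` and `y = x^{(j+1)}`. Then `x^{(j)}_k = y_k + y_{2n-1-k}`, while the odd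
DCT-II entries of `y` are, up to a factor `√2`, the DCT-IV entries of the difference vector
`y_k - y_{2n-1-k}`. Periodization never widens the support interval, so the support of `y` spans
at most `m ≤ M` entries; as `x^{(j)}` has a nonzero entry before its last `M` positions, this
support lies in one half of `y`, and the difference vector is `±x^{(j)}`.

It remains to see that the first `s` DCT-IV entries of a vector with `s` nonzero entries cannot
all vanish. With `θ_l = (2l+1)π/(4n) ∈ (0, π/2)`, expanding `(2 cos θ)^(2i+1)` into cosines of odd
multiples of `θ` turns these equations into `∑_l v_l cos θ_l (cos² θ_l)^i = 0` for `i < s`, a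
Vandermonde system in the distinct nodes `cos² θ_l`.
-/

open Finset

theorem perAux_cast (j : ℕ) {s s' : ℕ} (h : s = s') (x : Fin (2 ^ (j + s')) → ℝ) :
    perAux j s (x ∘ Fin.cast (by rw [h])) = perAux j s' x := by
  subst h; rfl

-- `perAux` performs the outermost fold first; this exposes the innermost one.
theorem perAux_succ_eq_halfSum (j s : ℕ) (x : Fin (2 ^ (j + (s + 1))) → ℝ) :
    perAux j (s + 1) x = halfSum (2 ^ j)
      (perAux (j + 1) s (x ∘ Fin.cast (by rw [Nat.add_right_comm, add_assoc]))
        ∘ Fin.cast (pow_succ' 2 j).symm) := by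
  induction s with
  | zero => rfl
  | succ s ih =>
    rw [perAux, ih, perAux]
    congr 3
    funext k
    have hpow : 2 ^ (j + (s + 1)) = 2 ^ (j + 1 + s) := by rw [Nat.add_right_comm, add_assoc]
    simp only [halfSum, Function.comp_apply]
    congr 2
    ext
    simp only [Fin.val_cast]
    omega

theorem reflPer_eq_halfSum {J j : ℕ} (h : j ≤ J) (hJ : j + 1 ≤ J) (x : Fin (2 ^ J) → ℝ) :
    reflPer J j h x =
      halfSum (2 ^ j) (reflPer J (j + 1) hJ x ∘ Fin.cast (pow_succ' 2 j).symm) := by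
  have hs : J - j = J - (j + 1) + 1 := by omega
  exact (perAux_cast j hs (x ∘ Fin.cast (by rw [← hs, Nat.add_sub_cancel' h]))).trans
    (perAux_succ_eq_halfSum j _ _)

def SupportWidthLE {n : ℕ} (y : Fin n → ℝ) (w : ℕ) : Prop :=
  ∃ a : ℕ, ∀ k : Fin n, y k ≠ 0 → a ≤ (k : ℕ) ∧ (k : ℕ) ≤ a + w

def halfDiff (n : ℕ) (x : Fin (2 * n) → ℝ) : Fin n → ℝ :=
  fun k => x ⟨(k : ℕ), by have := k.isLt; omega⟩ -
           x ⟨2 * n - 1 - (k : ℕ), by have := k.isLt; omega⟩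

theorem ne_zero_or_ne_zero_of_halfSum_ne_zero {n : ℕ} {y : Fin (2 * n) → ℝ} {k : Fin n}
    (h : halfSum n y k ≠ 0) :
    y ⟨k, by omega⟩ ≠ 0 ∨ y ⟨2 * n - 1 - k, by omega⟩ ≠ 0 := by
  contrapose! h
  simp only [halfSum, h.1, h.2, add_zero]

namespace SupportWidthLE

variable {n w : ℕ}

theorem comp_cast {n' : ℕ} {y : Fin n' → ℝ} (hy : SupportWidthLE y w) (h : n = n') :
    SupportWidthLE (y ∘ Fin.cast h) w := by
  obtain ⟨a, ha⟩ := hy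
  exact ⟨a, fun k hk => ha _ hk⟩

theorem halfSum {y : Fin (2 * n) → ℝ} (hy : SupportWidthLE y w) :
    SupportWidthLE (halfSum n y) w := by
  obtain ⟨a, ha⟩ := hy
  refine ⟨if a + w < n then a else if n ≤ a then 2 * n - 1 - (a + w) else
    min a (2 * n - 1 - (a + w)), fun k hk => ?_⟩
  have hk' := k.isLt
  rcases ne_zero_or_ne_zero_of_halfSum_ne_zero hk with h | h
  · have := ha _ h
    simp only at this
    split_ifs <;> omega
  · have := ha _ h
    simp only at this
    split_ifs <;> omega

theorem perAux {j : ℕ} : ∀ {s : ℕ} {y : Fin (2 ^ (j + s)) → ℝ}, SupportWidthLE y w →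
    SupportWidthLE (perAux j s y) w
  | 0, _, hy => hy
  | s + 1, _, hy => perAux (s := s) (hy.comp_cast _).halfSum

theorem reflPer {J j : ℕ} (h : j ≤ J) {x : Fin (2 ^ J) → ℝ} (hx : SupportWidthLE x w) :
    SupportWidthLE (reflPer J j h x) w :=
  (hx.comp_cast _).perAux

end SupportWidthLE

theorem ShortSupp.supportWidthLE {n m μ : ℕ} {y : Fin n → ℝ} (hy : ShortSupp y m μ) :
    SupportWidthLE y (m - 1) :=
  ⟨μ, fun k hk => by
    have := hy.pos
    have := mt (hy.outside k) hk
    omega⟩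

theorem ShortSupp.card_support_le {n m μ : ℕ} {y : Fin n → ℝ} (hy : ShortSupp y m μ) :
    #{k | y k ≠ 0} ≤ m := by
  calc #{k | y k ≠ 0} ≤ #(Finset.Ico μ (μ + m)) :=
        Finset.card_le_card_of_injOn Fin.val
          (fun k hk => by
            have := mt (hy.outside k) (Finset.mem_filter.mp hk).2
            simp only [Finset.coe_Ico, Set.mem_Ico]
            omega)
          Fin.val_injective.injOn
    _ = m := by simp

theorem halfDiff_eq_halfSum_or_neg {n w : ℕ} {y : Fin (2 * n) → ℝ} (hy : SupportWidthLE y w)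
    (k₀ : Fin n) (hk₀ : (k₀ : ℕ) + w < n) (hne : halfSum n y k₀ ≠ 0) :
    halfDiff n y = halfSum n y ∨ halfDiff n y = -halfSum n y := by
  obtain ⟨a, ha⟩ := hy
  have hzero : ∀ k : Fin (2 * n), ((k : ℕ) < a ∨ a + w < k) → y k = 0 := fun k hk => by
    by_contra h
    have := ha k h
    omega
  have hk₀' := k₀.isLt
  have hhalf : a + w < n ∨ n ≤ a := by
    by_contra! hmid
    rcases ne_zero_or_ne_zero_of_halfSum_ne_zero hne with h | h
    · exact h (hzero _ (by simp only; omega))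
    · exact h (hzero _ (by simp only; omega))
  rcases hhalf with hlow | hhigh
  · left
    funext k
    have := k.isLt
    simp only [halfDiff, halfSum, hzero ⟨2 * n - 1 - k, _⟩ (by simp only; omega)]
    ring
  · right
    funext k
    have := k.isLt
    simp only [halfDiff, halfSum, Pi.neg_apply, hzero ⟨k, _⟩ (by simp only; omega)]
    ring

theorem sum_halfSum (n : ℕ) (f : Fin (2 * n) → ℝ) : ∑ k, halfSum n f k = ∑ l, f l := by
  rw [← Fin.sum_congr' f (two_mul n).symm, Fin.sum_univ_add,
    ← Equiv.sum_comp Fin.revPerm (fun i => f (Fin.cast _ (Fin.natAdd n i))),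
    ← Finset.sum_add_distrib]
  refine Finset.sum_congr rfl fun k _ => ?_
  simp only [halfSum]
  congr 2
  ext
  simp only [Fin.val_cast, Fin.val_natAdd, Fin.revPerm_apply, Fin.val_rev]
  omega

theorem CII_mulVec_cast {N N' : ℕ} (h : N = N') (y : Fin N' → ℝ) (i : Fin N') :
    (CII N' *ᵥ y) i = (CII N *ᵥ (y ∘ Fin.cast h)) (Fin.cast h.symm i) := by
  subst h; rfl

theorem cos_odd_mul_reflect {n l : ℕ} (i : ℕ) (hl : l < 2 * n) :
    Real.cos ((2 * i + 1) * (2 * ((2 * n - 1 - l : ℕ) : ℝ) + 1) * Real.pi / (4 * n))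
      = -Real.cos ((2 * i + 1) * (2 * (l : ℝ) + 1) * Real.pi / (4 * n)) := by
  have hn : (n : ℝ) ≠ 0 := Nat.cast_ne_zero.mpr (by omega)
  have harg : (2 * i + 1) * (2 * ((2 * n - 1 - l : ℕ) : ℝ) + 1) * Real.pi / (4 * n)
      = Real.pi - (2 * i + 1) * (2 * (l : ℝ) + 1) * Real.pi / (4 * n) + i * (2 * Real.pi) := by
    rw [Nat.cast_sub (by omega), Nat.cast_sub (by omega)]
    field_simp
    push_cast
    ring
  rw [harg, Real.cos_add_nat_mul_two_pi, Real.cos_pi_sub]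

theorem sqrt_two_mul_CII_mulVec_odd (n : ℕ) (y : Fin (2 * n) → ℝ) (i : Fin n) :
    √2 * (CII (2 * n) *ᵥ y) ⟨2 * i + 1, by omega⟩ = (CIV n *ᵥ halfDiff n y) i := by
  have hn : 0 < n := i.pos
  have hentry : ∀ l : Fin (2 * n), √2 * CII (2 * n) ⟨2 * i + 1, by omega⟩ l
      = √(2 / n) * Real.cos ((2 * i + 1) * (2 * (l : ℝ) + 1) * Real.pi / (4 * n)) := by
    intro l
    rw [CII, Matrix.of_apply, Nat.mod_eq_of_lt (show 2 * (i : ℕ) + 1 < 2 * n by omega),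
      if_neg (by omega), mul_one, ← mul_assoc, ← Real.sqrt_mul zero_le_two]
    congr 2
    · push_cast; field_simp
    · push_cast; ring
  simp only [mulVec, dotProduct, Finset.mul_sum, ← mul_assoc, hentry]
  rw [← sum_halfSum]
  refine Finset.sum_congr rfl fun l _ => ?_
  simp only [halfSum, halfDiff, CIV, Matrix.of_apply]
  rw [cos_odd_mul_reflect i (show (l : ℕ) < 2 * n by omega)]
  ring

theorem eq_zero_of_forall_sum_mul_pow_eq_zero {K ι : Type*} [Field K] [DecidableEq ι]
    {s : Finset ι} {d b : ι → K} (hd : Set.InjOn d s)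
    (h : ∀ i < #s, ∑ t ∈ s, b t * d t ^ i = 0) {t₀ : ι} (ht₀ : t₀ ∈ s) : b t₀ = 0 := by
  set p := Lagrange.basis s d t₀
  have hp : p.natDegree < #s := by
    rw [Lagrange.natDegree_basis hd ht₀]
    exact Nat.sub_lt (Finset.card_pos.mpr ⟨t₀, ht₀⟩) one_pos
  calc b t₀ = ∑ t ∈ s, b t * p.eval (d t) := by
        rw [Finset.sum_eq_single_of_mem t₀ ht₀ fun t ht hne =>
          by rw [Lagrange.eval_basis_of_ne hne.symm ht, mul_zero],
          Lagrange.eval_basis_self hd ht₀, mul_one]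
    _ = ∑ i ∈ range #s, p.coeff i * ∑ t ∈ s, b t * d t ^ i := by
        simp only [Polynomial.eval_eq_sum_range' hp, Finset.mul_sum]
        rw [Finset.sum_comm]
        exact Finset.sum_congr rfl fun _ _ => Finset.sum_congr rfl fun _ _ => by ring
    _ = 0 := Finset.sum_eq_zero fun i hi => by rw [h i (Finset.mem_range.mp hi), mul_zero]

theorem two_mul_cos_pow (θ : ℝ) (n : ℕ) :
    (2 * Real.cos θ) ^ n
      = ∑ r ∈ range (n + 1), (n.choose r : ℝ) * Real.cos ((2 * r - n) * θ) := by
  have key : ((2 * Real.cos θ : ℝ) : ℂ) ^ n = ∑ r ∈ range (n + 1),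
      ((n.choose r : ℝ) : ℂ) * Complex.exp (((2 * r - n) * θ : ℝ) * Complex.I) := by
    have h1 : ((2 * Real.cos θ : ℝ) : ℂ)
        = Complex.exp (θ * Complex.I) + Complex.exp (-θ * Complex.I) := by
      push_cast
      rw [← Complex.two_cos]
    rw [h1, add_pow]
    refine Finset.sum_congr rfl fun r hr => ?_
    have hrn : r ≤ n := Nat.lt_succ_iff.mp (Finset.mem_range.mp hr)
    rw [← Complex.exp_nat_mul, ← Complex.exp_nat_mul, ← Complex.exp_add, Nat.cast_sub hrn]
    push_cast
    ring_nf
  have h := congrArg Complex.re key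
  rw [← Complex.ofReal_pow, Complex.ofReal_re, Complex.re_sum] at h
  rw [h]
  exact Finset.sum_congr rfl fun r _ => by
    rw [Complex.re_ofReal_mul, Complex.exp_ofReal_mul_I_re]

theorem exists_cos_two_mul_sub_odd_eq {i r : ℕ} (hr : r < 2 * i + 2) :
    ∃ k ≤ i, ∀ θ : ℝ, Real.cos ((2 * r - (2 * i + 1 : ℕ)) * θ) = Real.cos ((2 * k + 1) * θ) := by
  rcases le_or_gt r i with hri | hri
  · refine ⟨i - r, Nat.sub_le i r, fun θ => ?_⟩
    rw [← Real.cos_neg, Nat.cast_sub hri]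
    push_cast
    ring_nf
  · refine ⟨r - i - 1, by omega, fun θ => ?_⟩
    rw [Nat.cast_sub (by omega), Nat.cast_sub (by omega)]
    push_cast
    ring_nf

theorem sum_mul_cos_pow_odd_eq_zero {ι : Type*} {s : Finset ι} {a θ : ι → ℝ} {m : ℕ}
    (H : ∀ i < m, ∑ t ∈ s, a t * Real.cos ((2 * i + 1) * θ t) = 0) {i : ℕ} (hi : i < m) :
    ∑ t ∈ s, a t * Real.cos (θ t) ^ (2 * i + 1) = 0 := by
  have hexp : (2 : ℝ) ^ (2 * i + 1) * ∑ t ∈ s, a t * Real.cos (θ t) ^ (2 * i + 1)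
      = ∑ r ∈ range (2 * i + 2), ((2 * i + 1).choose r : ℝ) *
          ∑ t ∈ s, a t * Real.cos ((2 * r - (2 * i + 1 : ℕ)) * θ t) := by
    simp only [Finset.mul_sum]
    rw [Finset.sum_comm]
    refine Finset.sum_congr rfl fun t _ => ?_
    rw [mul_left_comm, ← mul_pow, two_mul_cos_pow, Finset.mul_sum]
    exact Finset.sum_congr rfl fun r _ => by ring
  have hzero : ∀ r ∈ range (2 * i + 2),
      ∑ t ∈ s, a t * Real.cos ((2 * r - (2 * i + 1 : ℕ)) * θ t) = 0 := fun r hr => by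
    obtain ⟨k, hk, hcos⟩ := exists_cos_two_mul_sub_odd_eq (Finset.mem_range.mp hr)
    simp only [hcos]
    exact H k (by omega)
  have h2 := hexp.trans (Finset.sum_eq_zero fun r hr => by rw [hzero r hr, mul_zero])
  exact (mul_eq_zero.mp h2).resolve_left (by positivity)

theorem eq_zero_of_forall_sum_mul_cos_odd_mul_eq_zero {ι : Type*} [DecidableEq ι]
    {s : Finset ι} {a θ : ι → ℝ} (hθ : ∀ t ∈ s, θ t ∈ Set.Ico 0 (Real.pi / 2))
    (hinj : Set.InjOn θ s) (H : ∀ i < #s, ∑ t ∈ s, a t * Real.cos ((2 * i + 1) * θ t) = 0)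
    {t₀ : ι} (ht₀ : t₀ ∈ s) : a t₀ = 0 := by
  have hcos_pos : ∀ t ∈ s, 0 < Real.cos (θ t) := fun t ht =>
    Real.cos_pos_of_mem_Ioo ⟨by linarith [(hθ t ht).1, Real.pi_pos], (hθ t ht).2⟩
  have hθ_Icc : ∀ t ∈ s, θ t ∈ Set.Icc 0 Real.pi := fun t ht =>
    ⟨(hθ t ht).1, by linarith [(hθ t ht).2, Real.pi_pos]⟩
  have hinj_sq : Set.InjOn (fun t => Real.cos (θ t) ^ 2) s := fun t ht t' ht' h =>
    hinj ht ht' (Real.injOn_cos (hθ_Icc t ht) (hθ_Icc t' ht')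
      ((pow_left_inj₀ (hcos_pos t ht).le (hcos_pos t' ht').le two_ne_zero).mp h))
  have hmul := eq_zero_of_forall_sum_mul_pow_eq_zero (b := fun t => a t * Real.cos (θ t))
    hinj_sq (fun i hi => by
      simp only [mul_assoc, ← pow_mul, ← pow_succ']
      exact sum_mul_cos_pow_odd_eq_zero H hi) ht₀
  exact (mul_eq_zero.mp hmul).resolve_right (hcos_pos t₀ ht₀).ne'

theorem eq_zero_of_forall_lt_card_support_CIV_mulVec_eq_zero {n : ℕ} {v : Fin n → ℝ}
    (h : ∀ i : Fin n, (i : ℕ) < #{l | v l ≠ 0} → (CIV n *ᵥ v) i = 0) : v = 0 := by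
  funext t₀
  rw [Pi.zero_apply]
  by_contra ht₀
  have hn : (0 : ℝ) < n := by have := t₀.pos; positivity
  refine ht₀ (eq_zero_of_forall_sum_mul_cos_odd_mul_eq_zero (s := {l | v l ≠ 0})
    (θ := fun l : Fin n => (2 * (l : ℝ) + 1) * Real.pi / (4 * n)) (fun l _ => ?_)
    (fun l _ l' _ hl => ?_) (fun i hi => ?_) (Finset.mem_filter.mpr ⟨Finset.mem_univ _, ht₀⟩))
  · have hl : (l : ℝ) + 1 ≤ n := by exact_mod_cast l.isLt
    constructor
    · positivity
    · rw [div_lt_div_iff₀ (by positivity) two_pos]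
      nlinarith [Real.pi_pos]
  · have : ((l : ℕ) : ℝ) = l' := by
      field_simp at hl
      nlinarith [Real.pi_pos]
    exact Fin.ext (by exact_mod_cast this)
  · have hin : i < n := hi.trans_le (card_le_univ _ |>.trans_eq (Fintype.card_fin n))
    have hzero : √(2 / n) * ∑ l, v l * Real.cos ((2 * i + 1) * ((2 * (l : ℝ) + 1) * Real.pi
        / (4 * n))) = 0 := by
      rw [← h ⟨i, hin⟩ hi, Finset.mul_sum]
      exact Finset.sum_congr rfl fun l _ => by simp only [CIV, Matrix.of_apply]; ring_nf
    rw [Finset.sum_filter_of_ne fun l _ hl => left_ne_zero_of_mul hl]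
    exact (mul_eq_zero.mp hzero).resolve_left (by positivity)

theorem exists_nonzero_odd_entry (J m M μ : ℕ) (x : Fin (2 ^ J) → ℝ)
    (hmM : m ≤ M) (hs : ShortSupp x m μ)
    (j : ℕ) (hJ : j + 1 ≤ J)
    (hnotlast : ∃ k : Fin (2 ^ j), (k : ℕ) < 2 ^ j - M ∧
        reflPer J j (le_trans (Nat.le_succ j) hJ) x k ≠ 0)
    (mj μj : ℕ)
    (hsj : ShortSupp (reflPer J j (le_trans (Nat.le_succ j) hJ) x) mj μj) :
    ∃ k : Fin (2 ^ j), (k : ℕ) < mj ∧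
      (CII (2 ^ (j + 1))).mulVec (reflPer J (j + 1) hJ x)
          ⟨2 * (k : ℕ) + 1, by
            have hk := k.isLt
            have h2 : 2 ^ (j + 1) = 2 * 2 ^ j := by rw [pow_succ]; ring
            omega⟩ ≠ 0 := by
  set y := reflPer J (j + 1) hJ x ∘ Fin.cast (pow_succ' 2 j).symm
  have hfold := reflPer_eq_halfSum (le_trans (Nat.le_succ j) hJ) hJ x
  obtain ⟨k₀, hk₀M, hk₀⟩ := hnotlast
  have hdiff : halfDiff (2 ^ j) y = halfSum (2 ^ j) y ∨ halfDiff (2 ^ j) y = -halfSum (2 ^ j) y :=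
    halfDiff_eq_halfSum_or_neg ((hs.supportWidthLE.reflPer hJ).comp_cast _) k₀
      (by have := hs.pos; omega) (hfold ▸ hk₀)
  by_contra! hodd
  have hCIV : ∀ i : Fin (2 ^ j), (i : ℕ) < mj →
      (CIV (2 ^ j) *ᵥ reflPer J j (le_trans (Nat.le_succ j) hJ) x) i = 0 := fun i hi => by
    have hCII : (CII (2 * 2 ^ j) *ᵥ y) ⟨2 * i + 1, by omega⟩ = 0 :=
      (CII_mulVec_cast _ _ _).symm.trans (hodd i hi)
    have h0 : (CIV (2 ^ j) *ᵥ halfDiff (2 ^ j) y) i = 0 := by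
      rw [← sqrt_two_mul_CII_mulVec_odd, hCII, mul_zero]
    rcases hdiff with h | h <;> simpa [h, hfold, Matrix.mulVec_neg] using h0
  have hzero := eq_zero_of_forall_lt_card_support_CIV_mulVec_eq_zero fun i hi =>
    hCIV i (hi.trans_le hsj.card_support_le)
  exact hsj.first ⟨μj, by have := hsj.bdd; have := hsj.pos; omega⟩ rfl (congrFun hzero _)
end
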